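/- arXiv:math/0201033 — 5 statements merged into one kernel-verified Lean document; each statement's English description precedes it below -/
import Mathlib

section
/- Let p : F → E be a connected covering of directed graphs and v ∈ F⁰. For w ∈ p⁻¹(p(v)), choose a reduced walk a in F from w to v; then p(a) is a reduced loop at p(v), the coset p(a)·p∗π₁(F, v) in π₁(E, p(v))/p∗π₁(F, v) does not depend on the choice of a, and the resulting map θ : w ↦ p(a)·p∗π₁(F, v) is a bijection from p⁻¹(p(v)) onto the set of left cosets π₁(E, p(v))/p∗π₁(F, v). -/
/-- A directed graph `E = (E⁰, E¹, r, s)`. -/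
structure Digraph' : Type 1 where
  V : Type
  E : Type
  r : E → V
  s : E → V

namespace Digraph'

/-- A step in a walk: an edge traversed forwards (`true`) or backwards (`false`). -/
abbrev Step (X : Digraph') : Type := X.E × Bool

def stepSrc (X : Digraph') (p : X.Step) : X.V := if p.2 then X.s p.1 else X.r p.1

def stepTgt (X : Digraph') (p : X.Step) : X.V := if p.2 then X.r p.1 else X.s p.1

/-- `X.IsWalk u v l`: `l` is a walk from `u` to `v`. -/
def IsWalk (X : Digraph') : X.V → X.V → List X.Step → Prop
  | u, v, [] => u = v
  | u, v, p :: l => X.stepSrc p = u ∧ X.IsWalk (X.stepTgt p) v l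

/-- A walk is reduced if it contains no subwalk `e e⁻¹` or `e⁻¹ e`. -/
def Reduced (X : Digraph') (l : List X.Step) : Prop :=
  List.Chain' (fun p q => ¬(p.1 = q.1 ∧ p.2 = !q.2)) l

/-- The reverse of a walk, traversing it backwards and inverting each edge. -/
def winv (X : Digraph') (l : List X.Step) : List X.Step :=
  (l.map fun p => (p.1, !p.2)).reverse

open Classical in
/-- The reduction of a walk: repeatedly delete adjacent pairs `e e⁻¹`, `e⁻¹ e`. -/
noncomputable def red (X : Digraph') : List X.Step → List X.Step
  | [] => []
  | p :: l =>
    match X.red l with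
    | [] => [p]
    | q :: m => if p.1 = q.1 ∧ p.2 = !q.2 then m else p :: q :: m

/-- The reduced loops in `X` based at `u`; the carrier of `π₁(X, u)`. -/
abbrev Loop (X : Digraph') (u : X.V) : Type :=
  {l : List X.Step // X.IsWalk u u l ∧ X.Reduced l}

/-- `X` is connected: there is a walk between any two vertices. -/
def Connected (X : Digraph') : Prop := ∀ u v : X.V, ∃ l, X.IsWalk u v l

end Digraph'

/-- A morphism of directed graphs. -/
structure Digraph'.Hom (F E : Digraph') where
  vmap : F.V → E.V
  emap : F.E → E.E
  hr : ∀ e, E.r (emap e) = vmap (F.r e)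
  hs : ∀ e, E.s (emap e) = vmap (F.s e)

/-- The action of a graph morphism on walks. -/
def Digraph'.Hom.wmap {F E : Digraph'} (p : Digraph'.Hom F E) (l : List F.Step) :
    List E.Step :=
  l.map fun q => (p.emap q.1, q.2)

/-- A covering of directed graphs: a surjective morphism restricting to bijections
on incoming and outgoing edge sets at each vertex. -/
structure Digraph'.IsCovering {F E : Digraph'} (p : Digraph'.Hom F E) : Prop where
  vsurj : Function.Surjective p.vmap
  esurj : Function.Surjective p.emap
  rbij : ∀ v : F.V, Set.BijOn p.emap {e | F.r e = v} {e | E.r e = p.vmap v}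
  sbij : ∀ v : F.V, Set.BijOn p.emap {e | F.s e = v} {e | E.s e = p.vmap v}

open Digraph'

/-!
Reducing a walk is free reduction of a word in the edges, so `FreeGroup` supplies confluence
and the interaction of reduction with reversal. Since a covering is injective on the edges at
each vertex, it maps reduced walks to reduced walks, commutes with reduction, and walks in `E`
lift uniquely from any vertex over their source.

Lifting backwards from `v`, every loop at `p v` is the image of a walk ending at `v` and
starting in the fibre. For two walks `a`, `a'` from `w` to `v`,
`p(a)⁻¹ p(a') = p(red (a⁻¹ a'))` lies in `p₊π₁(F, v)`, so the coset depends only on `w`.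
Conversely, if `p(a') = p(a) p(ℓ) = p(red (a ℓ))` for a loop `ℓ` at `v`, unique lifting
from `v` forces `a'` and `red (a ℓ)` to start at the same vertex.
-/

namespace Digraph'

section Walks

variable {X : Digraph'}

lemma red_eq_reduce (l : List X.Step) :
    X.red l = @FreeGroup.reduce X.E (Classical.decEq _) l := by
  induction l with
  | nil => rfl
  | cons q l ih =>
    simp only [red, ih, FreeGroup.reduce.cons]
    -- the two `if`s differ only in how their condition is decided
    cases @FreeGroup.reduce X.E (Classical.decEq _) l <;> congr

lemma winv_eq_invRev (l : List X.Step) : X.winv l = FreeGroup.invRev l := rfl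

lemma winv_winv (l : List X.Step) : X.winv (X.winv l) = l :=
  FreeGroup.invRev_invRev

lemma reduced_iff_isReduced {l : List X.Step} : X.Reduced l ↔ FreeGroup.IsReduced l :=
  List.IsChain.iff fun a b => by cases a.2 <;> cases b.2 <;> simp

lemma reduced_iff_red_eq {l : List X.Step} : X.Reduced l ↔ X.red l = l := by
  let := Classical.decEq X.E
  rw [reduced_iff_isReduced, red_eq_reduce, FreeGroup.isReduced_iff_reduce_eq]

lemma reduced_red (l : List X.Step) : X.Reduced (X.red l) := by
  let := Classical.decEq X.E
  rw [reduced_iff_red_eq, red_eq_reduce, red_eq_reduce, FreeGroup.reduce.idem]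

lemma Reduced.red_eq {l : List X.Step} (h : X.Reduced l) : X.red l = l :=
  reduced_iff_red_eq.1 h

lemma Reduced.winv {l : List X.Step} (h : X.Reduced l) : X.Reduced (X.winv l) := by
  let := Classical.decEq X.E
  rw [reduced_iff_red_eq, winv_eq_invRev, red_eq_reduce, FreeGroup.reduce_invRev,
    ← red_eq_reduce, h.red_eq]

lemma stepSrc_flip (q : X.Step) : X.stepSrc (q.1, !q.2) = X.stepTgt q := by
  rcases q with ⟨e, _ | _⟩ <;> rfl

lemma stepTgt_flip (q : X.Step) : X.stepTgt (q.1, !q.2) = X.stepSrc q := by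
  rcases q with ⟨e, _ | _⟩ <;> rfl

lemma isWalk_append_iff {u w : X.V} {l m : List X.Step} :
    X.IsWalk u w (l ++ m) ↔ ∃ v, X.IsWalk u v l ∧ X.IsWalk v w m := by
  induction l generalizing u with
  | nil => simp [IsWalk]
  | cons q l ih => simp [IsWalk, ih, and_assoc]

lemma IsWalk.append {u v w : X.V} {l m : List X.Step} (hl : X.IsWalk u v l)
    (hm : X.IsWalk v w m) : X.IsWalk u w (l ++ m) :=
  isWalk_append_iff.2 ⟨v, hl, hm⟩

lemma IsWalk.tgt_unique {u v v' : X.V} {l : List X.Step} (h : X.IsWalk u v l)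
    (h' : X.IsWalk u v' l) : v = v' := by
  induction l generalizing u with
  | nil => exact h.symm.trans h'
  | cons q l ih => exact ih h.2 h'.2

lemma IsWalk.winv {u v : X.V} {l : List X.Step} (h : X.IsWalk u v l) :
    X.IsWalk v u (X.winv l) := by
  induction l generalizing u with
  | nil => exact h.symm
  | cons q l ih =>
    rw [winv_eq_invRev, FreeGroup.invRev_cons]
    exact (ih h.2).append ⟨stepSrc_flip q, (stepTgt_flip q).trans h.1⟩

lemma IsWalk.of_red_step {u v : X.V} {l m : List X.Step}
    (hs : @FreeGroup.Red.Step X.E l m) (h : X.IsWalk u v l) : X.IsWalk u v m := by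
  obtain @⟨l₁, l₂, e, b⟩ := hs
  obtain ⟨t, h₁, hsrc, -, h₂⟩ := isWalk_append_iff.1 h
  rw [show X.stepTgt (e, !b) = X.stepSrc (e, b) from stepTgt_flip (e, b), hsrc] at h₂
  exact h₁.append h₂

lemma IsWalk.of_red {u v : X.V} {l m : List X.Step} (hr : @FreeGroup.Red X.E l m)
    (h : X.IsWalk u v l) : X.IsWalk u v m := by
  induction hr with
  | refl => exact h
  | tail _ hs ih => exact ih.of_red_step hs

lemma IsWalk.red {u v : X.V} {l : List X.Step} (h : X.IsWalk u v l) :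
    X.IsWalk u v (X.red l) := by
  let := Classical.decEq X.E
  exact h.of_red (red_eq_reduce l ▸ FreeGroup.reduce.red)

end Walks

section LoopGroup

variable {X : Digraph'} {u : X.V} [Group (X.Loop u)]

lemma Loop.one_val (hmul : ∀ a b : X.Loop u, (a * b).val = X.red (a.val ++ b.val)) :
    (1 : X.Loop u).val = [] := by
  let nil : X.Loop u := ⟨[], rfl, List.IsChain.nil⟩
  calc (1 : X.Loop u).val = X.red ((1 : X.Loop u).val ++ nil.val) := by
        rw [List.append_nil, (1 : X.Loop u).2.2.red_eq]
    _ = (1 * nil).val := (hmul 1 nil).symm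
    _ = [] := by rw [one_mul]

lemma Loop.inv_val (hmul : ∀ a b : X.Loop u, (a * b).val = X.red (a.val ++ b.val))
    (a : X.Loop u) : a⁻¹.val = X.winv a.val := by
  let := Classical.decEq X.E
  have hba : (⟨X.winv a.val, a.2.1.winv, a.2.2.winv⟩ : X.Loop u) * a = 1 := Subtype.ext <| by
    rw [hmul, Loop.one_val hmul, red_eq_reduce]
    exact FreeGroup.reduce_invRev_left_cancel
  rw [inv_eq_of_mul_eq_one_left hba]

end LoopGroup

namespace Hom

variable {F E : Digraph'} (p : F.Hom E)

lemma stepSrc_map (q : F.Step) : E.stepSrc (p.emap q.1, q.2) = p.vmap (F.stepSrc q) := by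
  rcases q with ⟨e, _ | _⟩ <;> simp [stepSrc, p.hr, p.hs]

lemma stepTgt_map (q : F.Step) : E.stepTgt (p.emap q.1, q.2) = p.vmap (F.stepTgt q) := by
  rcases q with ⟨e, _ | _⟩ <;> simp [stepTgt, p.hr, p.hs]

lemma wmap_append (l m : List F.Step) : p.wmap (l ++ m) = p.wmap l ++ p.wmap m :=
  List.map_append

lemma wmap_winv (l : List F.Step) : p.wmap (F.winv l) = E.winv (p.wmap l) := by
  simp [wmap, winv, List.map_reverse, Function.comp_def]

lemma _root_.Digraph'.IsWalk.wmap {u v : F.V} {l : List F.Step} (h : F.IsWalk u v l) :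
    E.IsWalk (p.vmap u) (p.vmap v) (p.wmap l) := by
  induction l generalizing u with
  | nil => exact congrArg p.vmap h
  | cons q l ih =>
    exact ⟨(p.stepSrc_map q).trans (congrArg p.vmap h.1), p.stepTgt_map q ▸ ih h.2⟩

lemma _root_.FreeGroup.Red.wmap {l m : List F.Step} (h : @FreeGroup.Red F.E l m) :
    @FreeGroup.Red E.E (p.wmap l) (p.wmap m) := by
  refine Relation.ReflTransGen.lift _ (fun a b hab => ?_) _ _ h
  obtain @⟨l₁, l₂, e, b⟩ := hab
  simpa only [Function.onFun, Hom.wmap, List.map_append, List.map_cons] using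
    FreeGroup.Red.Step.not

end Hom

namespace IsCovering

variable {F E : Digraph'} {p : F.Hom E}

lemma step_eq_of_map_eq (hp : IsCovering p) {q q' : F.Step}
    (hsrc : F.stepSrc q = F.stepSrc q') (h : (p.emap q.1, q.2) = (p.emap q'.1, q'.2)) :
    q = q' := by
  rcases q with ⟨e, b⟩
  rcases q' with ⟨e', b'⟩
  obtain ⟨he, rfl⟩ := Prod.mk.inj h
  cases b
  · exact Prod.ext ((hp.rbij (F.r e')).injOn hsrc rfl he) rfl
  · exact Prod.ext ((hp.sbij (F.s e')).injOn hsrc rfl he) rfl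

lemma exists_step_lift (hp : IsCovering p) {u : F.V} {q : E.Step}
    (hq : E.stepSrc q = p.vmap u) :
    ∃ q' : F.Step, F.stepSrc q' = u ∧ (p.emap q'.1, q'.2) = q := by
  rcases q with ⟨e, _ | _⟩
  · obtain ⟨e', he', rfl⟩ := (hp.rbij u).surjOn (s := {e | F.r e = u}) hq
    exact ⟨(e', false), he', rfl⟩
  · obtain ⟨e', he', rfl⟩ := (hp.sbij u).surjOn (s := {e | F.s e = u}) hq
    exact ⟨(e', true), he', rfl⟩

lemma reduced_wmap (hp : IsCovering p) {u v : F.V} {l : List F.Step} (hw : F.IsWalk u v l)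
    (hr : F.Reduced l) : E.Reduced (p.wmap l) := by
  induction l generalizing u with
  | nil => exact List.IsChain.nil
  | cons q l ih =>
    cases l with
    | nil => exact List.isChain_singleton _
    | cons q' m =>
      refine List.isChain_cons_cons.2
        ⟨fun ⟨he, hb⟩ => (List.isChain_cons_cons.1 hr).1 ⟨?_, hb⟩, ih hw.2 hr.tail⟩
      -- a cancelling pair downstairs makes `q` reversed and `q'` two lifts of one step
      have hlift : ((q.1, !q.2) : F.Step) = q' :=
        hp.step_eq_of_map_eq ((stepSrc_flip q).trans hw.2.1.symm) (by simp_all)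
      exact (Prod.ext_iff.1 hlift).1

lemma wmap_red (hp : IsCovering p) {u v : F.V} {l : List F.Step} (hw : F.IsWalk u v l) :
    p.wmap (F.red l) = E.red (p.wmap l) := by
  let := Classical.decEq F.E
  let := Classical.decEq E.E
  have hred : FreeGroup.Red (p.wmap l) (p.wmap (F.red l)) :=
    (red_eq_reduce l ▸ FreeGroup.reduce.red).wmap p
  rw [red_eq_reduce (p.wmap l), FreeGroup.reduce.eq_of_red hred, ← red_eq_reduce,
    (hp.reduced_wmap hw.red (reduced_red l)).red_eq]

lemma exists_lift (hp : IsCovering p) {u : F.V} {t : E.V} {L : List E.Step}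
    (hL : E.IsWalk (p.vmap u) t L) :
    ∃ (M : List F.Step) (w : F.V), F.IsWalk u w M ∧ p.wmap M = L ∧ p.vmap w = t := by
  induction L generalizing u with
  | nil => exact ⟨[], u, rfl, rfl, hL⟩
  | cons q L ih =>
    obtain ⟨q', hsrc, rfl⟩ := hp.exists_step_lift hL.1
    obtain ⟨M, w, hM, rfl, hw⟩ := ih (u := F.stepTgt q') (p.stepTgt_map q' ▸ hL.2)
    exact ⟨q' :: M, w, ⟨hsrc, hM⟩, rfl, hw⟩

lemma exists_lift_to (hp : IsCovering p) {s : E.V} {v : F.V} {L : List E.Step}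
    (hL : E.IsWalk s (p.vmap v) L) :
    ∃ (M : List F.Step) (w : F.V), F.IsWalk w v M ∧ p.wmap M = L ∧ p.vmap w = s := by
  obtain ⟨M, w, hM, hML, hw⟩ := hp.exists_lift hL.winv
  exact ⟨F.winv M, w, hM.winv, by rw [p.wmap_winv, hML, winv_winv], hw⟩

lemma eq_of_wmap_eq (hp : IsCovering p) {u w w' : F.V} {M M' : List F.Step}
    (hM : F.IsWalk u w M) (hM' : F.IsWalk u w' M') (h : p.wmap M = p.wmap M') : M = M' := by
  induction M generalizing u M' with
  | nil => exact (List.map_eq_nil_iff.1 h.symm).symm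
  | cons q M ih =>
    cases M' with
    | nil => exact absurd h (List.cons_ne_nil _ _)
    | cons q' M' =>
      obtain ⟨hq, hrest⟩ := List.cons.inj h
      obtain rfl := hp.step_eq_of_map_eq (hM.1.trans hM'.1.symm) hq
      rw [ih hM.2 hM'.2 hrest]

lemma src_eq_of_wmap_eq (hp : IsCovering p) {w w' v : F.V} {M M' : List F.Step}
    (hM : F.IsWalk w v M) (hM' : F.IsWalk w' v M') (h : p.wmap M = p.wmap M') : w = w' := by
  have hinv := hp.eq_of_wmap_eq hM.winv hM'.winv (by rw [p.wmap_winv, p.wmap_winv, h])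
  exact hM.winv.tgt_unique (hinv ▸ hM'.winv)

variable {v : F.V} [Group (F.Loop v)] [Group (E.Loop (p.vmap v))]
  {f : F.Loop v →* E.Loop (p.vmap v)}

lemma coset_wmap_eq (hp : IsCovering p)
    (hmul : ∀ a b : E.Loop (p.vmap v), (a * b).val = E.red (a.val ++ b.val))
    (hf : ∀ l : F.Loop v, (f l).val = p.wmap l.val)
    {w : F.V} {a a' : List F.Step} (ha : F.IsWalk w v a) (ha' : F.IsWalk w v a')
    (hb : E.IsWalk (p.vmap v) (p.vmap v) (p.wmap a) ∧ E.Reduced (p.wmap a))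
    (hb' : E.IsWalk (p.vmap v) (p.vmap v) (p.wmap a') ∧ E.Reduced (p.wmap a')) :
    (QuotientGroup.mk ⟨p.wmap a, hb⟩ : E.Loop (p.vmap v) ⧸ f.range) =
      QuotientGroup.mk ⟨p.wmap a', hb'⟩ := by
  have hloop : F.IsWalk v v (F.winv a ++ a') := ha.winv.append ha'
  refine QuotientGroup.eq.2 <| MonoidHom.mem_range.2
    ⟨⟨F.red (F.winv a ++ a'), hloop.red, reduced_red _⟩, Subtype.ext ?_⟩
  rw [hf, hp.wmap_red hloop, hmul, Loop.inv_val hmul, p.wmap_append, p.wmap_winv]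

lemma src_eq_of_coset_eq (hp : IsCovering p)
    (hmul : ∀ a b : E.Loop (p.vmap v), (a * b).val = E.red (a.val ++ b.val))
    (hf : ∀ l : F.Loop v, (f l).val = p.wmap l.val)
    {w w' : F.V} {a a' : List F.Step} (ha : F.IsWalk w v a) (ha' : F.IsWalk w' v a')
    (hb : E.IsWalk (p.vmap v) (p.vmap v) (p.wmap a) ∧ E.Reduced (p.wmap a))
    (hb' : E.IsWalk (p.vmap v) (p.vmap v) (p.wmap a') ∧ E.Reduced (p.wmap a'))
    (h : (QuotientGroup.mk ⟨p.wmap a, hb⟩ : E.Loop (p.vmap v) ⧸ f.range) =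
      QuotientGroup.mk ⟨p.wmap a', hb'⟩) :
    w = w' := by
  obtain ⟨ℓ, hℓ⟩ := MonoidHom.mem_range.1 (QuotientGroup.eq.1 h)
  have hwalk : F.IsWalk w v (a ++ ℓ.val) := ha.append ℓ.2.1
  refine hp.src_eq_of_wmap_eq hwalk.red ha' ?_
  calc p.wmap (F.red (a ++ ℓ.val)) = E.red (p.wmap a ++ (f ℓ).val) := by
        rw [hp.wmap_red hwalk, p.wmap_append, hf]
    _ = (⟨p.wmap a, hb⟩ * f ℓ : E.Loop (p.vmap v)).val :=
        (hmul ⟨p.wmap a, hb⟩ (f ℓ)).symm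
    _ = p.wmap a' := by rw [hℓ, mul_inv_cancel_left]

end IsCovering

end Digraph'

theorem fibre_bijects_with_cosets_general {F E : Digraph'} (p : Digraph'.Hom F E)
    (hp : Digraph'.IsCovering p) (hconn : F.Connected) (v : F.V)
    [GF : Group (F.Loop v)]
    [GE : Group (E.Loop (p.vmap v))]
    (hGE : ∀ a b : E.Loop (p.vmap v), (a * b).val = E.red (a.val ++ b.val))
    (f : F.Loop v →* E.Loop (p.vmap v))
    (hf : ∀ l : F.Loop v, (f l).val = p.wmap l.val) :
    (∀ (w : F.V) (a : List F.Step), p.vmap w = p.vmap v → F.IsWalk w v a → F.Reduced a →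
      E.IsWalk (p.vmap v) (p.vmap v) (p.wmap a) ∧ E.Reduced (p.wmap a)) ∧
    ∃ θ : {w : F.V // p.vmap w = p.vmap v} ≃ (E.Loop (p.vmap v) ⧸ f.range),
      ∀ (w : F.V) (hw : p.vmap w = p.vmap v) (a : List F.Step),
        F.IsWalk w v a → F.Reduced a →
        ∀ hb : E.IsWalk (p.vmap v) (p.vmap v) (p.wmap a) ∧ E.Reduced (p.wmap a),
          θ ⟨w, hw⟩ = QuotientGroup.mk (⟨p.wmap a, hb⟩ : E.Loop (p.vmap v)) := by
  have hloop (w : F.V) (a : List F.Step) (hw : p.vmap w = p.vmap v) (ha : F.IsWalk w v a)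
      (hr : F.Reduced a) : E.IsWalk (p.vmap v) (p.vmap v) (p.wmap a) ∧ E.Reduced (p.wmap a) :=
    ⟨hw ▸ ha.wmap p, hp.reduced_wmap ha hr⟩
  refine ⟨hloop, ?_⟩
  have hreduced_walk (w : F.V) : ∃ a, F.IsWalk w v a ∧ F.Reduced a :=
    let ⟨l, hl⟩ := hconn w v
    ⟨F.red l, hl.red, reduced_red l⟩
  choose walk hwalk hred using hreduced_walk
  let θ (w : {w // p.vmap w = p.vmap v}) : E.Loop (p.vmap v) ⧸ f.range :=
    QuotientGroup.mk ⟨p.wmap (walk w), hloop w (walk w) w.2 (hwalk w) (hred w)⟩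
  refine ⟨Equiv.ofBijective θ ⟨?_, ?_⟩,
    fun w _ a ha _ hb => hp.coset_wmap_eq hGE hf (hwalk w) ha _ hb⟩
  · rintro ⟨w, hw⟩ ⟨w', hw'⟩ h
    exact Subtype.ext (hp.src_eq_of_coset_eq hGE hf (hwalk w) (hwalk w') _ _ h)
  · refine fun y => QuotientGroup.induction_on y fun x => ?_
    obtain ⟨M, w, hM, hMx, hw⟩ := hp.exists_lift_to x.2.1
    refine ⟨⟨w, hw⟩, (hp.coset_wmap_eq hGE hf (hwalk w) hM _ (hMx ▸ x.2)).trans ?_⟩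
    exact congrArg _ (Subtype.ext hMx)

/-- for a connected covering `p : F → E`, choosing for each `w` in the fibre
`p⁻¹(p(v))` a reduced walk `a` from `w` to `v`, the image `p(a)` is a reduced loop at
`p(v)`, its coset mod `p₊π₁(F, v)` is independent of the choice, and `w ↦ p(a)·p₊π₁(F,v)`
is a bijection of the fibre onto the left coset space `π₁(E, p(v))/p₊π₁(F, v)`. -/
theorem fibre_bijects_with_cosets {F E : Digraph'} (p : Digraph'.Hom F E)
    (hp : Digraph'.IsCovering p) (hconn : F.Connected) (v : F.V)
    [GF : Group (F.Loop v)]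
    (hGF : ∀ a b : F.Loop v, (a * b).val = F.red (a.val ++ b.val))
    [GE : Group (E.Loop (p.vmap v))]
    (hGE : ∀ a b : E.Loop (p.vmap v), (a * b).val = E.red (a.val ++ b.val))
    (f : F.Loop v →* E.Loop (p.vmap v))
    (hf : ∀ l : F.Loop v, (f l).val = p.wmap l.val) :
    (∀ (w : F.V) (a : List F.Step), p.vmap w = p.vmap v → F.IsWalk w v a → F.Reduced a →
      E.IsWalk (p.vmap v) (p.vmap v) (p.wmap a) ∧ E.Reduced (p.wmap a)) ∧
    ∃ θ : {w : F.V // p.vmap w = p.vmap v} ≃ (E.Loop (p.vmap v) ⧸ f.range),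
      ∀ (w : F.V) (hw : p.vmap w = p.vmap v) (a : List F.Step),
        F.IsWalk w v a → F.Reduced a →
        ∀ hb : E.IsWalk (p.vmap v) (p.vmap v) (p.wmap a) ∧ E.Reduced (p.wmap a),
          θ ⟨w, hw⟩ = QuotientGroup.mk (⟨p.wmap a, hb⟩ : E.Loop (p.vmap v)) :=
  fibre_bijects_with_cosets_general p hp hconn v (GF := GF) (GE := GE) hGE f hf
end

section
/- Let c : E¹ → G be a labelling of the edges of a directed graph E by a group G, and let H be a subgroup of G. Then the coordinate projection maps (x, gH) ↦ x from the relative skew product E ×_c (G/H) to E form a covering of directed graphs. -/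
namespace Digraph'

/-- The relative skew product `E ×_c (G/H)` of a graph `E` by a labelling `c : E¹ → G`
relative to a subgroup `H ≤ G`: vertices `E⁰ × (G/H)`, edges `E¹ × (G/H)`,
`r(e, gH) = (r(e), gH)`, `s(e, gH) = (s(e), c(e)gH)`. -/
def skew (X : Digraph') {G : Type} [Group G] (c : X.E → G) (H : Subgroup G) : Digraph' where
  V := X.V × (G ⧸ H)
  E := X.E × (G ⧸ H)
  r := fun p => (X.r p.1, p.2)
  s := fun p => (X.s p.1, c p.1 • p.2)

/-- The coordinate projection `(x, gH) ↦ x` from `E ×_c (G/H)` to `E`. -/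
def skewProj (X : Digraph') {G : Type} [Group G] (c : X.E → G) (H : Subgroup G) :
    Digraph'.Hom (X.skew c H) X where
  vmap := Prod.fst
  emap := Prod.fst
  hr := fun _ => rfl
  hs := fun _ => rfl

end Digraph'

-- Both edge fibres of a skew product have this shape: `σ e = id` at the range,
-- `σ e = (c e • ·)` at the source.
theorem bijOn_fst_fiber_of_perm {α β γ : Type*} (f : α → γ) (σ : α → Equiv.Perm β) (x : γ × β) :
    Set.BijOn Prod.fst {p : α × β | (f p.1, σ p.1 p.2) = x} {a | f a = x.1} := by
  refine ⟨fun p hp => congrArg Prod.fst hp, ?_, fun a ha => ⟨(a, (σ a).symm x.2), ?_, rfl⟩⟩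
  · rintro ⟨a, b⟩ hab ⟨a', b'⟩ hab' (rfl : a = a')
    have hσ : σ a b = σ a b' := (congrArg Prod.snd hab).trans (congrArg Prod.snd hab').symm
    rw [(σ a).injective hσ]
  · exact Prod.ext ha ((σ a).apply_symm_apply x.2)

open Digraph'

/-- the coordinate projections `(x, gH) ↦ x` from the relative skew product
`E ×_c (G/H)` to `E` form a covering of directed graphs. -/
theorem skewProj_isCovering (X : Digraph') {G : Type} [Group G] (c : X.E → G)
    (H : Subgroup G) :
    Digraph'.IsCovering (X.skewProj c H) :=
  ⟨Prod.fst_surjective, Prod.fst_surjective,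
    bijOn_fst_fiber_of_perm X.r fun _ => Equiv.refl _,
    bijOn_fst_fiber_of_perm X.s fun e => MulAction.toPerm (c e)⟩
end

section
/- Let c, c' : E¹ → G be two labellings of a connected directed graph E by a group G which are cohomologous, i.e., there is a function b : E⁰ → G with b(s(e)) c'(e) = c(e) b(r(e)) for all edges e. Then for any subgroup H ≤ G, the relative skew products E ×_{c'} (G/H) and E ×_c (G/H) are isomorphic as directed graphs. -/
open Digraph'

theorem Function.bijective_prodMk_fst_smul {α β G : Type*} [Group G] [MulAction G β]
    (f : α → G) : Function.Bijective fun p : α × β => (p.1, f p.1 • p.2) :=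
  (Equiv.prodShear (Equiv.refl α) fun a => MulAction.toPerm (f a)).bijective

def Digraph'.skewTwist (X : Digraph') {G : Type} [Group G] {c c' : X.E → G} (b : X.V → G)
    (hb : ∀ e : X.E, b (X.s e) * c' e = c e * b (X.r e)) (H : Subgroup G) :
    Digraph'.Hom (X.skew c' H) (X.skew c H) where
  vmap p := (p.1, b p.1 • p.2)
  emap p := (p.1, b (X.r p.1) • p.2)
  hr _ := rfl
  hs p := by
    change (X.s p.1, c p.1 • b (X.r p.1) • p.2) = (X.s p.1, b (X.s p.1) • c' p.1 • p.2)
    rw [smul_smul, smul_smul, hb]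

theorem cohomologous_labellings_iso_skew_general (X : Digraph')
    {G : Type} [Group G] (c c' : X.E → G) (b : X.V → G)
    (hb : ∀ e : X.E, b (X.s e) * c' e = c e * b (X.r e)) (H : Subgroup G) :
    ∃ φ : Digraph'.Hom (X.skew c' H) (X.skew c H),
      Function.Bijective φ.vmap ∧ Function.Bijective φ.emap :=
  ⟨X.skewTwist b hb H, Function.bijective_prodMk_fst_smul b,
    Function.bijective_prodMk_fst_smul (b ∘ X.r)⟩

/-- cohomologous labellings `c, c'` (i.e. `b(s(e)) c'(e) = c(e) b(r(e))`
for some `b : E⁰ → G`) give isomorphic relative skew products `E ×_{c'} (G/H)` and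
`E ×_c (G/H)`. -/
theorem cohomologous_labellings_iso_skew (X : Digraph') (hconn : X.Connected)
    {G : Type} [Group G] (c c' : X.E → G) (b : X.V → G)
    (hb : ∀ e : X.E, b (X.s e) * c' e = c e * b (X.r e)) (H : Subgroup G) :
    ∃ φ : Digraph'.Hom (X.skew c' H) (X.skew c H),
      Function.Bijective φ.vmap ∧ Function.Bijective φ.emap :=
  cohomologous_labellings_iso_skew_general X c c' b hb H
end

section
/- Let c : E¹ → G be a labelling of the edges of a directed graph E by a group G, and let H act on the skew product graph E ×_c G on the right by (x, g)·h = (x, gh) for a subgroup H ≤ G. Then this action of H on E ×_c G is free on vertices and edges, and the quotient graph (E ×_c G)/H is isomorphic to the relative skew product E ×_c (G/H). -/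
namespace Digraph'

/-- The (full) skew product `E ×_c G`: vertices `E⁰ × G`, edges `E¹ × G`,
`r(e, g) = (r(e), g)`, `s(e, g) = (s(e), c(e)g)`. -/
def skewG (X : Digraph') {G : Type} [Group G] (c : X.E → G) : Digraph' where
  V := X.V × G
  E := X.E × G
  r := fun p => (X.r p.1, p.2)
  s := fun p => (X.s p.1, c p.1 * p.2)

/-- The orbit equivalence relation on `α × G` for the right action
`(x, g)·h = (x, gh)` of a subgroup `H ≤ G`. -/
def orbSetoid {G : Type} [Group G] (H : Subgroup G) (α : Type) : Setoid (α × G) where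
  r p q := p.1 = q.1 ∧ ∃ h ∈ H, q.2 = p.2 * h
  iseqv := by
    constructor
    · exact fun p => ⟨rfl, 1, H.one_mem, (mul_one _).symm⟩
    · rintro ⟨x, g⟩ ⟨y, g'⟩ ⟨h1, h, hH, rfl⟩
      exact ⟨h1.symm, h⁻¹, H.inv_mem hH, by group⟩
    · rintro ⟨x, g⟩ ⟨y, g'⟩ ⟨z, g''⟩ ⟨h1, h, hH, rfl⟩ ⟨h2, k, hK, rfl⟩
      exact ⟨h1.trans h2, h * k, H.mul_mem hH hK, by dsimp; group⟩

/-- The quotient graph `(E ×_c G)/H` of the skew product by the right action of `H`. -/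
def quotSkewG (X : Digraph') {G : Type} [Group G] (c : X.E → G) (H : Subgroup G) :
    Digraph' where
  V := Quotient (orbSetoid H X.V)
  E := Quotient (orbSetoid H X.E)
  r := Quotient.map (fun p => ((X.skewG c).r p)) (by
    rintro ⟨e, g⟩ ⟨e', g'⟩ ⟨h1, h, hH, rfl⟩
    dsimp at h1
    subst h1
    exact ⟨rfl, h, hH, rfl⟩)
  s := Quotient.map (fun p => ((X.skewG c).s p)) (by
    rintro ⟨e, g⟩ ⟨e', g'⟩ ⟨h1, h, hH, rfl⟩
    dsimp at h1
    subst h1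
    exact ⟨rfl, h, hH, (mul_assoc _ _ _).symm⟩)

end Digraph'

open Digraph'

/-! The `H`-orbit of `(x, g)` is determined by `(x, gH)`, and the range and source maps of
`E ×_c G` descend along `g ↦ gH` because `c(e) • gH = (c(e) g)H`. -/

theorem Prod.eq_one_of_mk_snd_mul_eq {α G : Type} [Group G] (p : α × G) (h : G)
    (hp : (p.1, p.2 * h) = p) : h = 1 :=
  mul_eq_left.mp (congrArg Prod.snd hp)

namespace Digraph'

section OrbitQuotient

variable {G : Type} [Group G] (H : Subgroup G) (α : Type)

theorem orbSetoid_rel_iff {p q : α × G} :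
    orbSetoid H α p q ↔ (p.1, (p.2 : G ⧸ H)) = (q.1, (q.2 : G ⧸ H)) := by
  rw [Prod.ext_iff, QuotientGroup.eq]
  refine and_congr_right fun _ => ⟨?_, fun hpq => ⟨_, hpq, by group⟩⟩
  rintro ⟨h, hH, hq⟩
  simpa [hq] using hH

def orbQuotToProdQuotient : Quotient (orbSetoid H α) → α × (G ⧸ H) :=
  Quotient.lift (fun p => (p.1, (p.2 : G ⧸ H))) fun _ _ => (orbSetoid_rel_iff H α).mp

theorem orbQuotToProdQuotient_bijective : Function.Bijective (orbQuotToProdQuotient H α) := by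
  refine ⟨?_, ?_⟩
  · rintro ⟨p⟩ ⟨q⟩ hpq
    exact Quotient.sound ((orbSetoid_rel_iff H α).mpr hpq)
  · rintro ⟨x, ⟨g⟩⟩
    exact ⟨⟦(x, g)⟧, rfl⟩

end OrbitQuotient

def quotSkewGToSkew (X : Digraph') {G : Type} [Group G] (c : X.E → G) (H : Subgroup G) :
    Hom (X.quotSkewG c H) (X.skew c H) where
  vmap := orbQuotToProdQuotient H X.V
  emap := orbQuotToProdQuotient H X.E
  hr := by rintro ⟨e, g⟩; rfl
  hs := by rintro ⟨e, g⟩; rfl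

end Digraph'

/-- the right action `(x, g)·h = (x, gh)` of `H ≤ G` on the skew product
`E ×_c G` is free on vertices and edges, and the quotient graph `(E ×_c G)/H` is
isomorphic to the relative skew product `E ×_c (G/H)`. -/
theorem quotient_of_skew_product_iso_relative_skew (X : Digraph') {G : Type} [Group G]
    (c : X.E → G) (H : Subgroup G) :
    (∀ (p : (X.skewG c).V) (h : G), h ∈ H → (p.1, p.2 * h) = p → h = 1) ∧
    (∀ (p : (X.skewG c).E) (h : G), h ∈ H → (p.1, p.2 * h) = p → h = 1) ∧
    ∃ φ : Digraph'.Hom (X.quotSkewG c H) (X.skew c H),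
      Function.Bijective φ.vmap ∧ Function.Bijective φ.emap := by
  refine ⟨fun p h _ => Prod.eq_one_of_mk_snd_mul_eq p h,
    fun p h _ => Prod.eq_one_of_mk_snd_mul_eq p h,
    X.quotSkewGToSkew c H, orbQuotToProdQuotient_bijective H X.V,
    orbQuotToProdQuotient_bijective H X.E⟩
end

section
/- Let δ be a coaction of a discrete group G on a C*-algebra A and H ≤ G a subgroup. Then the restriction δ̂|_H of the dual action to H on A ×_δ G is proper in Rieffel's sense with respect to the dense invariant *-subalgebra (A ×_δ G)₀ = span{j_A(a_r)j_G(χ_t)}: for a = j_A(a_r)j_G(χ_t) and b = j_A(b_s)j_G(χ_u), the multiplier ⟨a,b⟩_D defined as j_A(a_r* b_s) j_G(χ_{uH}) if rt = su and 0 otherwise satisfies Σ_{h∈H} c · δ̂_h(a*b) = c · ⟨a,b⟩_D for every c ∈ (A ×_δ G)₀ (the sum having only finitely many nonzero terms), and c⟨a,b⟩_D, ⟨a,b⟩_D c ∈ (A ×_δ G)₀. -/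
open scoped Pointwise

/-!
For `d ∈ A_w` covariance reads `j_G(χ_v) j_A(d) = j_A(d) j_G(χ_{w⁻¹v})`, so
`δ̂_h(a*b) = j_G(χ_{th⁻¹}) j_A(a_r* b_s) j_G(χ_{uh⁻¹})` collapses, by orthogonality of the
`j_G(χ_g)`, to `j_A(a_r* b_s) j_G(χ_{uh⁻¹})` when `rt = su` and to `0` otherwise. Every element
of `(A ×_δ G)₀ j_A(a_r* b_s)` is a sum of products `m j_G(χ_g)`, and
`m j_G(χ_g) j_G(χ_{uh⁻¹})` vanishes unless `h = g⁻¹u`; so each summand contributes at most one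
term, present exactly when `g ∈ uH`, which is what right multiplication by `j_G(χ_{uH})` detects.
The closure properties of `(A ×_δ G)₀` are checked on the generators `j_A(a_l) j_G(χ_v)`,
which multiplication by `j_A(A_w)` or `j_G(χ_S)`, the maps `δ̂_h` and the involution send to
generators or `0`.
-/

open Classical in
theorem finsum_subtype_ite_coe_eq {α S N : Type*} [SetLike S α] [AddCommMonoid N] (s : S) (a : α)
    (y : N) :
    (Function.support fun x : s => if (x : α) = a then y else 0).Finite ∧
      ∑ᶠ x : s, (if (x : α) = a then y else 0) = if a ∈ s then y else 0 := by
  have coe_eq : ∀ x ∈ Function.support fun x : s => if (x : α) = a then y else 0, (x : α) = a :=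
    fun x hx => by_contra fun h => hx (if_neg h)
  refine ⟨Set.Subsingleton.finite fun x hx x' hx' =>
    Subtype.ext ((coe_eq x hx).trans (coe_eq x' hx').symm), ?_⟩
  by_cases ha : a ∈ s
  · rw [if_pos ha, finsum_eq_single _ ⟨a, ha⟩ fun x hx => if_neg fun h => hx (Subtype.ext h)]
    exact if_pos rfl
  · rw [if_neg ha]
    exact finsum_eq_zero_of_forall_eq_zero fun x => if_neg fun h : (x : α) = a => ha (h ▸ x.2)

theorem Submodule.mul_mem_span_of_forall_mem {R M : Type*} [CommSemiring R] [Semiring M]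
    [Algebra R M] {s : Set M} {x c : M} (h : ∀ y ∈ s, x * y ∈ span R s) (hc : c ∈ span R s) :
    x * c ∈ span R s :=
  span_le (p := (span R s).comap (LinearMap.mulLeft R x)) |>.mpr h hc

theorem Submodule.mul_mem_span_of_forall_mem' {R M : Type*} [CommSemiring R] [Semiring M]
    [Algebra R M] {s : Set M} {x c : M} (h : ∀ y ∈ s, y * x ∈ span R s) (hc : c ∈ span R s) :
    c * x ∈ span R s :=
  span_le (p := (span R s).comap (LinearMap.mulRight R x)) |>.mpr h hc

namespace CrossedProduct

open Classical

variable {R G A M : Type*} [CommSemiring R] [Ring M] [Algebra R M]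

/- The crossed product is modelled inside its multiplier algebra `M`: `As s` is the spectral
subspace `A_s`, `jG t = j_G(χ_t)`, `jGH S = j_G(χ_S)` and `dhat = δ̂`; `core` is `(A ×_δ G)₀`. -/
def generators (As : G → Set A) (jA : A → M) (jG : G → M) : Set M :=
  {m | ∃ (l v : G) (cl : A), cl ∈ As l ∧ m = jA cl * jG v}

variable (R) in
def core (As : G → Set A) (jA : A → M) (jG : G → M) : Submodule R M :=
  Submodule.span R (generators As jA jG)

variable {As : G → Set A} {jA : A → M} {jG : G → M} {jGH : Set G → M}

theorem generator_mem_core {l v : G} {cl : A} (hcl : cl ∈ As l) :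
    jA cl * jG v ∈ core R As jA jG :=
  Submodule.subset_span ⟨l, v, cl, hcl, rfl⟩

theorem core_le_span_mul_jG :
    core R As jA jG ≤ Submodule.span R (Set.range fun p : M × G => p.1 * jG p.2) :=
  Submodule.span_mono fun _ ⟨_, v, cl, _, hm⟩ => ⟨(jA cl, v), hm.symm⟩

theorem core_induction [SMul R A] (hAs_smul : ∀ (s : G) (z : R) a, a ∈ As s → z • a ∈ As s)
    (hjA_smul : ∀ (z : R) a, jA (z • a) = z • jA a) {p : M → Prop} (zero : p 0)
    (add : ∀ x y, p x → p y → p (x + y))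
    (generator : ∀ l v cl, cl ∈ As l → p (jA cl * jG v)) {c : M} (hc : c ∈ core R As jA jG) :
    p c := by
  induction hc using Submodule.closure_induction with
  | zero => exact zero
  | add x y _ _ hx hy => exact add x y hx hy
  | smul_mem z x hx =>
    obtain ⟨l, v, cl, hcl, rfl⟩ := hx
    rw [← smul_mul_assoc, ← hjA_smul]
    exact generator l v _ (hAs_smul l z cl hcl)

theorem jG_mul_jA [Group G]
    (hcov : ∀ (s t : G) (a : A), a ∈ As s → jA a * jG t = jG (s * t) * jA a)
    {s : G} {a : A} (ha : a ∈ As s) (v : G) : jG v * jA a = jA a * jG (s⁻¹ * v) := by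
  rw [hcov s _ a ha, mul_inv_cancel_left]

theorem dhat_jG_mul_jA_mul_jG [Group G] {dhat : G → M → M}
    (hjG_orth : ∀ t u, jG t * jG u = if t = u then jG t else 0)
    (hcov : ∀ (s t : G) (a : A), a ∈ As s → jA a * jG t = jG (s * t) * jA a)
    (hdhat_mul : ∀ g x y, dhat g (x * y) = dhat g x * dhat g y)
    (hdhat_jA : ∀ g a, dhat g (jA a) = jA a)
    (hdhat_jG : ∀ g t, dhat g (jG t) = jG (t * g⁻¹))
    {w : G} {d : A} (hd : d ∈ As w) (t u h : G) :
    dhat h (jG t * jA d * jG u) = if w⁻¹ * t = u then jA d * jG (u * h⁻¹) else 0 := by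
  rw [hdhat_mul, hdhat_mul, hdhat_jG, hdhat_jA, hdhat_jG, jG_mul_jA hcov hd, mul_assoc, hjG_orth,
    ← mul_assoc, mul_left_inj]
  split_ifs with heq
  · rw [heq]
  · rw [mul_zero]

theorem jA_mul_mem_core [Mul G] [Mul A]
    (hAs_mul : ∀ (s t : G) a b, a ∈ As s → b ∈ As t → a * b ∈ As (s * t))
    (hjA_mul : ∀ a b, jA (a * b) = jA a * jA b) {s : G} {a : A} (ha : a ∈ As s) {c : M}
    (hc : c ∈ core R As jA jG) : jA a * c ∈ core R As jA jG := by
  refine Submodule.mul_mem_span_of_forall_mem (fun _ ⟨l, v, cl, hcl, hy⟩ => ?_) hc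
  rw [hy, ← mul_assoc, ← hjA_mul]
  exact generator_mem_core (hAs_mul _ _ _ _ ha hcl)

theorem mul_jA_mem_core [Group G] [Mul A]
    (hAs_mul : ∀ (s t : G) a b, a ∈ As s → b ∈ As t → a * b ∈ As (s * t))
    (hjA_mul : ∀ a b, jA (a * b) = jA a * jA b)
    (hcov : ∀ (s t : G) (a : A), a ∈ As s → jA a * jG t = jG (s * t) * jA a)
    {s : G} {a : A} (ha : a ∈ As s) {c : M}
    (hc : c ∈ core R As jA jG) : c * jA a ∈ core R As jA jG := by
  refine Submodule.mul_mem_span_of_forall_mem' (fun _ ⟨l, v, cl, hcl, hy⟩ => ?_) hc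
  rw [hy, mul_assoc, jG_mul_jA hcov ha, ← mul_assoc, ← hjA_mul]
  exact generator_mem_core (hAs_mul _ _ _ _ hcl ha)

theorem mul_jGH_mem_core
    (hjGH_mull : ∀ (S : Set G) (t : G), jG t * jGH S = if t ∈ S then jG t else 0)
    (T : Set G) {c : M} (hc : c ∈ core R As jA jG) : c * jGH T ∈ core R As jA jG := by
  refine Submodule.mul_mem_span_of_forall_mem' (fun _ ⟨l, v, cl, hcl, hy⟩ => ?_) hc
  rw [hy, mul_assoc, hjGH_mull]
  split_ifs
  · exact generator_mem_core hcl
  · rw [mul_zero]; exact zero_mem _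

theorem jGH_mul_mem_core [Mul G]
    (hcov : ∀ (s t : G) (a : A), a ∈ As s → jA a * jG t = jG (s * t) * jA a)
    (hjGH_mulr : ∀ (S : Set G) (t : G), jGH S * jG t = if t ∈ S then jG t else 0)
    (T : Set G) {c : M} (hc : c ∈ core R As jA jG) : jGH T * c ∈ core R As jA jG := by
  refine Submodule.mul_mem_span_of_forall_mem (fun _ ⟨l, v, cl, hcl, hy⟩ => ?_) hc
  rw [hy, hcov l v cl hcl, ← mul_assoc, hjGH_mulr]
  split_ifs
  · rw [← hcov l v cl hcl]; exact generator_mem_core hcl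
  · rw [zero_mul]; exact zero_mem _

theorem dhat_mem_core [Group G] [SMul R A] {dhat : G → M → M}
    (hAs_smul : ∀ (s : G) (z : R) a, a ∈ As s → z • a ∈ As s)
    (hjA_smul : ∀ (z : R) a, jA (z • a) = z • jA a)
    (hdhat_add : ∀ g x y, dhat g (x + y) = dhat g x + dhat g y)
    (hdhat_mul : ∀ g x y, dhat g (x * y) = dhat g x * dhat g y)
    (hdhat_jA : ∀ g a, dhat g (jA a) = jA a)
    (hdhat_jG : ∀ g t, dhat g (jG t) = jG (t * g⁻¹))
    (g : G) {c : M} (hc : c ∈ core R As jA jG) : dhat g c ∈ core R As jA jG := by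
  refine core_induction (p := fun c => dhat g c ∈ core R As jA jG) hAs_smul hjA_smul ?_ ?_ ?_ hc
  · have map_zero : dhat g 0 = 0 := (AddMonoidHom.mk' (dhat g) (hdhat_add g)).map_zero
    rw [map_zero]
    exact zero_mem _
  · intro x y hx hy
    rw [hdhat_add]
    exact add_mem hx hy
  · intro l v cl hcl
    rw [hdhat_mul, hdhat_jA, hdhat_jG]
    exact generator_mem_core hcl

theorem star_mem_core [Group G] [SMul R A] [Star A] [StarRing M]
    (hAs_smul : ∀ (s : G) (z : R) a, a ∈ As s → z • a ∈ As s)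
    (hAs_star : ∀ (s : G) a, a ∈ As s → star a ∈ As s⁻¹)
    (hjA_smul : ∀ (z : R) a, jA (z • a) = z • jA a)
    (hjA_star : ∀ a, jA (star a) = star (jA a))
    (hjG_star : ∀ t, star (jG t) = jG t)
    (hcov : ∀ (s t : G) (a : A), a ∈ As s → jA a * jG t = jG (s * t) * jA a)
    {c : M} (hc : c ∈ core R As jA jG) : star c ∈ core R As jA jG := by
  refine core_induction (p := fun c => star c ∈ core R As jA jG) hAs_smul hjA_smul ?_ ?_ ?_ hc
  · rw [star_zero]
    exact zero_mem _
  · intro x y hx hy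
    rw [star_add]
    exact add_mem hx hy
  · intro l v cl hcl
    rw [star_mul, hjG_star, ← hjA_star, jG_mul_jA hcov (hAs_star l cl hcl)]
    exact generator_mem_core (hAs_star l cl hcl)

theorem finsum_mul_jG_mul_inv [Group G]
    (hjG_orth : ∀ t u, jG t * jG u = if t = u then jG t else 0)
    (hjGH_mull : ∀ (S : Set G) (t : G), jG t * jGH S = if t ∈ S then jG t else 0)
    (H : Subgroup G) (m : M) (g u : G) :
    (Function.support fun h : H => m * jG g * jG (u * (h : G)⁻¹)).Finite ∧
      ∑ᶠ h : H, m * jG g * jG (u * (h : G)⁻¹) = m * jG g * jGH (u • (H : Set G)) := by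
  have term_eq : ∀ h : H, m * jG g * jG (u * (h : G)⁻¹) =
      if (h : G) = g⁻¹ * u then m * jG g else 0 := by
    intro h
    rw [mul_assoc, hjG_orth]
    simp only [eq_mul_inv_iff_mul_eq, eq_inv_mul_iff_mul_eq, mul_ite, mul_zero]
  have mem_coset : g ∈ u • (H : Set G) ↔ g⁻¹ * u ∈ H := by
    rw [mem_leftCoset_iff, ← inv_mem_iff, mul_inv_rev, inv_inv, SetLike.mem_coe]
  simp only [term_eq, mul_assoc m, hjGH_mull, mem_coset, mul_ite, mul_zero]
  exact finsum_subtype_ite_coe_eq H _ _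

theorem finsum_mul_jG_mul_inv_of_mem_span [Group G]
    (hjG_orth : ∀ t u, jG t * jG u = if t = u then jG t else 0)
    (hjGH_mull : ∀ (S : Set G) (t : G), jG t * jGH S = if t ∈ S then jG t else 0)
    (H : Subgroup G) (u : G) {x : M}
    (hx : x ∈ Submodule.span R (Set.range fun p : M × G => p.1 * jG p.2)) :
    (Function.support fun h : H => x * jG (u * (h : G)⁻¹)).Finite ∧
      ∑ᶠ h : H, x * jG (u * (h : G)⁻¹) = x * jGH (u • (H : Set G)) := by
  induction hx using Submodule.span_induction with
  | mem _ hy =>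
    obtain ⟨⟨m, g⟩, rfl⟩ := hy
    exact finsum_mul_jG_mul_inv hjG_orth hjGH_mull H m g u
  | zero => simp
  | add x y _ _ hx hy =>
    simp only [add_mul]
    exact ⟨(hx.1.union hy.1).subset (Function.support_add _ _),
      by rw [finsum_add_distrib hx.1 hy.1, hx.2, hy.2]⟩
  | smul z x _ hx =>
    simp only [smul_mul_assoc]
    exact ⟨hx.1.subset (Function.support_const_smul_subset z _),
      by rw [← smul_finsum' z hx.1, hx.2]⟩

end CrossedProduct

open Classical in
theorem dual_action_is_proper_general {G : Type} [Group G] {A M : Type}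
    [NonUnitalNormedRing A] [StarRing A] [NormedSpace ℂ A]
    [NormedRing M] [StarRing M] [NormedAlgebra ℂ M]
    (As : G → Set A) (jA : A → M) (jG : G → M) (jGH : Set G → M)
    (hAs_smul : ∀ (s : G) (z : ℂ) a, a ∈ As s → z • a ∈ As s)
    (hAs_mul : ∀ (s t : G) a b, a ∈ As s → b ∈ As t → a * b ∈ As (s * t))
    (hAs_star : ∀ (s : G) a, a ∈ As s → star a ∈ As s⁻¹)
    (hjA_smul : ∀ (z : ℂ) a, jA (z • a) = z • jA a)
    (hjA_mul : ∀ a b, jA (a * b) = jA a * jA b)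
    (hjA_star : ∀ a, jA (star a) = star (jA a))
    (hjG_star : ∀ t, star (jG t) = jG t)
    (hjG_orth : ∀ t u, jG t * jG u = if t = u then jG t else 0)
    (hcov : ∀ (s t : G) (a : A), a ∈ As s → jA a * jG t = jG (s * t) * jA a)
    (hjGH_mulr : ∀ (S : Set G) (t : G), jGH S * jG t = if t ∈ S then jG t else 0)
    (hjGH_mull : ∀ (S : Set G) (t : G), jG t * jGH S = if t ∈ S then jG t else 0)
    (dhat : G → M → M)
    (hdhat_add : ∀ g x y, dhat g (x + y) = dhat g x + dhat g y)
    (hdhat_mul : ∀ g x y, dhat g (x * y) = dhat g x * dhat g y)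
    (hdhat_jA : ∀ g a, dhat g (jA a) = jA a)
    (hdhat_jG : ∀ g t, dhat g (jG t) = jG (t * g⁻¹))
    (H : Subgroup G) :
    ∀ (r t s u : G) (ar bs : A), ar ∈ As r → bs ∈ As s →
      (∀ c ∈ Submodule.span ℂ
          {m : M | ∃ (l v : G) (cl : A), cl ∈ As l ∧ m = jA cl * jG v},
        ((Function.support fun h : H =>
            c * dhat h (star (jA ar * jG t) * (jA bs * jG u))).Finite ∧
          ∑ᶠ h : H, c * dhat h (star (jA ar * jG t) * (jA bs * jG u)) =
            c * (if r * t = s * u then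
                  star (jA ar) * jA bs * jGH (u • (H : Set G)) else 0)) ∧
        (c * (if r * t = s * u then
                star (jA ar) * jA bs * jGH (u • (H : Set G)) else 0) ∈
            Submodule.span ℂ
              {m : M | ∃ (l v : G) (cl : A), cl ∈ As l ∧ m = jA cl * jG v}) ∧
        ((if r * t = s * u then
            star (jA ar) * jA bs * jGH (u • (H : Set G)) else 0) * c ∈
            Submodule.span ℂ
              {m : M | ∃ (l v : G) (cl : A), cl ∈ As l ∧ m = jA cl * jG v})) ∧
    (∀ c ∈ Submodule.span ℂ
        {m : M | ∃ (l v : G) (cl : A), cl ∈ As l ∧ m = jA cl * jG v},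
      (∀ h : H, dhat h c ∈ Submodule.span ℂ
          {m : M | ∃ (l v : G) (cl : A), cl ∈ As l ∧ m = jA cl * jG v}) ∧
      star c ∈ Submodule.span ℂ
          {m : M | ∃ (l v : G) (cl : A), cl ∈ As l ∧ m = jA cl * jG v}) := by
  open CrossedProduct in
  intro r t s u ar bs har hbs
  refine ⟨fun c hc => ?_, fun c hc =>
    ⟨fun h => dhat_mem_core hAs_smul hjA_smul hdhat_add hdhat_mul hdhat_jA hdhat_jG h hc,
      star_mem_core hAs_smul hAs_star hjA_smul hjA_star hjG_star hcov hc⟩⟩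
  have hd : star ar * bs ∈ As (r⁻¹ * s) := hAs_mul _ _ _ _ (hAs_star r ar har) hbs
  have hjA_d : star (jA ar) * jA bs = jA (star ar * bs) := by rw [hjA_mul, hjA_star]
  have inner_eq : star (jA ar * jG t) * (jA bs * jG u) = jG t * jA (star ar * bs) * jG u := by
    rw [star_mul, hjG_star, ← hjA_d, mul_assoc, mul_assoc, mul_assoc]
  have degree_eq : (r⁻¹ * s)⁻¹ * t = u ↔ r * t = s * u := by
    rw [mul_inv_rev, inv_inv, mul_assoc, inv_mul_eq_iff_eq_mul]
  simp only [inner_eq, dhat_jG_mul_jA_mul_jG hjG_orth hcov hdhat_mul hdhat_jA hdhat_jG hd,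
    degree_eq, hjA_d]
  split_ifs with hrt
  · have hcd : c * jA (star ar * bs) ∈ core ℂ As jA jG :=
      mul_jA_mem_core hAs_mul hjA_mul hcov hd hc
    simp only [← mul_assoc c]
    refine ⟨finsum_mul_jG_mul_inv_of_mem_span hjG_orth hjGH_mull H u (core_le_span_mul_jG hcd),
      ?_, ?_⟩
    · exact mul_jGH_mem_core hjGH_mull _ hcd
    · rw [mul_assoc]
      exact jA_mul_mem_core hAs_mul hjA_mul hd (jGH_mul_mem_core hcov hjGH_mulr _ hc)
  · simp

open Classical in
/-- Rieffel properness of the restricted dual action `δ̂|_H` with respect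
to `(A ×_δ G)₀`: for the spanning elements `a = j_A(a_r)j_G(χ_t)`,
`b = j_A(b_s)j_G(χ_u)`, the multiplier
`⟨a,b⟩_D = j_A(a_r* b_s) j_G(χ_{uH})` if `rt = su` (and `0` otherwise) satisfies
`Σ_{h∈H} c·δ̂_h(a*b) = c·⟨a,b⟩_D` for every `c ∈ (A ×_δ G)₀` (the sum having finite
support), and `c⟨a,b⟩_D, ⟨a,b⟩_D c ∈ (A ×_δ G)₀`; moreover `(A ×_δ G)₀` is
`δ̂|_H`-invariant and closed under `star`. -/
theorem dual_action_is_proper {G : Type} [Group G] {A M : Type}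
    [NonUnitalNormedRing A] [StarRing A] [NormedSpace ℂ A]
    [NormedRing M] [StarRing M] [CStarRing M] [NormedAlgebra ℂ M] [StarModule ℂ M]
    [CompleteSpace M]
    (As : G → Set A) (jA : A → M) (jG : G → M) (jGH : Set G → M)
    (hAs_dense : Dense (↑(Submodule.span ℂ (⋃ s, As s)) : Set A))
    (hAs_smul : ∀ (s : G) (z : ℂ) a, a ∈ As s → z • a ∈ As s)
    (hAs_add : ∀ (s : G) a b, a ∈ As s → b ∈ As s → a + b ∈ As s)
    (hAs_mul : ∀ (s t : G) a b, a ∈ As s → b ∈ As t → a * b ∈ As (s * t))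
    (hAs_star : ∀ (s : G) a, a ∈ As s → star a ∈ As s⁻¹)
    (hjA_add : ∀ a b, jA (a + b) = jA a + jA b)
    (hjA_smul : ∀ (z : ℂ) a, jA (z • a) = z • jA a)
    (hjA_mul : ∀ a b, jA (a * b) = jA a * jA b)
    (hjA_star : ∀ a, jA (star a) = star (jA a))
    (hjG_star : ∀ t, star (jG t) = jG t)
    (hjG_orth : ∀ t u, jG t * jG u = if t = u then jG t else 0)
    (hcov : ∀ (s t : G) (a : A), a ∈ As s → jA a * jG t = jG (s * t) * jA a)
    (hjGH_mulr : ∀ (S : Set G) (t : G), jGH S * jG t = if t ∈ S then jG t else 0)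
    (hjGH_mull : ∀ (S : Set G) (t : G), jG t * jGH S = if t ∈ S then jG t else 0)
    (hsep : ∀ m m' : M, (∀ t, m * jG t = m' * jG t) → m = m')
    (dhat : G → M → M)
    (hdhat_one : ∀ x, dhat 1 x = x)
    (hdhat_comp : ∀ g h x, dhat g (dhat h x) = dhat (g * h) x)
    (hdhat_add : ∀ g x y, dhat g (x + y) = dhat g x + dhat g y)
    (hdhat_mul : ∀ g x y, dhat g (x * y) = dhat g x * dhat g y)
    (hdhat_star : ∀ g x, dhat g (star x) = star (dhat g x))
    (hdhat_jA : ∀ g a, dhat g (jA a) = jA a)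
    (hdhat_jG : ∀ g t, dhat g (jG t) = jG (t * g⁻¹))
    (H : Subgroup G) :
    ∀ (r t s u : G) (ar bs : A), ar ∈ As r → bs ∈ As s →
      (∀ c ∈ Submodule.span ℂ
          {m : M | ∃ (l v : G) (cl : A), cl ∈ As l ∧ m = jA cl * jG v},
        ((Function.support fun h : H =>
            c * dhat h (star (jA ar * jG t) * (jA bs * jG u))).Finite ∧
          ∑ᶠ h : H, c * dhat h (star (jA ar * jG t) * (jA bs * jG u)) =
            c * (if r * t = s * u then
                  star (jA ar) * jA bs * jGH (u • (H : Set G)) else 0)) ∧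
        (c * (if r * t = s * u then
                star (jA ar) * jA bs * jGH (u • (H : Set G)) else 0) ∈
            Submodule.span ℂ
              {m : M | ∃ (l v : G) (cl : A), cl ∈ As l ∧ m = jA cl * jG v}) ∧
        ((if r * t = s * u then
            star (jA ar) * jA bs * jGH (u • (H : Set G)) else 0) * c ∈
            Submodule.span ℂ
              {m : M | ∃ (l v : G) (cl : A), cl ∈ As l ∧ m = jA cl * jG v})) ∧
    (∀ c ∈ Submodule.span ℂ
        {m : M | ∃ (l v : G) (cl : A), cl ∈ As l ∧ m = jA cl * jG v},
      (∀ h : H, dhat h c ∈ Submodule.span ℂ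
          {m : M | ∃ (l v : G) (cl : A), cl ∈ As l ∧ m = jA cl * jG v}) ∧
      star c ∈ Submodule.span ℂ
          {m : M | ∃ (l v : G) (cl : A), cl ∈ As l ∧ m = jA cl * jG v}) :=
  dual_action_is_proper_general As jA jG jGH hAs_smul hAs_mul hAs_star hjA_smul hjA_mul hjA_star
    hjG_star hjG_orth hcov hjGH_mulr hjGH_mull dhat hdhat_add hdhat_mul hdhat_jA hdhat_jG H
end
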